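/- Let m ≥ 4 be an even integer. There exists a constant C_m > 0 such that for all n ≥ 1: r_3(ℤ_m^n) ≥ (C_m / √n) · ((m+2)/2)^n. -/

import Mathlib

/-!
Write `m = 2 * q` and embed `{0, …, q}ⁿ` into `(ℤ/mℤ)ⁿ`. For `a, b, c ∈ {0, …, q}` with
`a + c ≡ 2 * b (mod 2 * q)` either `a + c = 2 * b` or `a = c ∈ {0, q}`, so the strictly concave
weight `arch q a = a * (q - a)` satisfies `arch q a + arch q c ≤ 2 * arch q b`, with equality only
if `a = c`. Hence every level set `{x | ∑ i, arch q (x i) = t}` is free of proper 3-term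
progressions. As a sum of `n` independent uniform variables, `∑ i, arch q (x i)` has variance
`O(n)`: by Chebyshev's inequality half of `{0, …, q}ⁿ` is covered by `O(√n)` of its level sets, and
by pigeonhole one of them has at least `(q + 1)ⁿ / O(√n)` elements, where `q + 1 = (m + 2) / 2`.
-/

open Finset

/-- `S ⊆ (ℤ/mℤ)^n` contains no proper `k`-term arithmetic progression. -/
def ProgFree (m k : ℕ) {n : ℕ} (S : Finset (Fin n → ZMod m)) : Prop :=
  ¬ ∃ x d : Fin n → ZMod m,
      (Function.Injective fun i : Fin k => x + (i : ℕ) • d) ∧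
      ∀ i : Fin k, x + (i : ℕ) • d ∈ S

/-- Maximal size of a subset of `(ℤ/mℤ)^n` without a proper `k`-term AP. -/
noncomputable def rAP (k m n : ℕ) : ℕ :=
  sSup {c : ℕ | ∃ S : Finset (Fin n → ZMod m), ProgFree m k S ∧ S.card = c}

theorem progFree_three_of_add_eq_add {m n : ℕ} {S : Finset (Fin n → ZMod m)}
    (hS : ∀ a ∈ S, ∀ b ∈ S, ∀ c ∈ S, a + c = b + b → a = c) : ProgFree m 3 S := by
  rintro ⟨x, d, hinj, hmem⟩
  have h02 := hS _ (hmem 0) _ (hmem 1) _ (hmem 2) (by simp only [Fin.isValue, Fin.val_zero,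
    Fin.val_one, Fin.val_two, zero_smul, one_smul, two_smul, add_zero]; abel)
  exact absurd (hinj h02) (by decide)

theorem card_le_rAP {k m n : ℕ} [NeZero m] {S : Finset (Fin n → ZMod m)} (hS : ProgFree m k S) :
    #S ≤ rAP k m n :=
  le_csSup ⟨Fintype.card (Fin n → ZMod m), fun _ ⟨T, _, hT⟩ => hT ▸ card_le_univ T⟩ ⟨S, hS, rfl⟩

def arch (q a : ℤ) : ℤ := a * (q - a)

theorem arch_add_arch_le {q a b c : ℤ} (ha : a ∈ Set.Icc 0 q) (hb : b ∈ Set.Icc 0 q)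
    (hc : c ∈ Set.Icc 0 q) (hdvd : 2 * q ∣ a + c - 2 * b) :
    arch q a + arch q c ≤ 2 * arch q b ∧ (arch q a + arch q c = 2 * arch q b → a = c) := by
  obtain ⟨ha₀, haq⟩ := ha
  obtain ⟨hb₀, hbq⟩ := hb
  obtain ⟨hc₀, hcq⟩ := hc
  -- `|a + c - 2 * b| ≤ 2 * q`, so the only wrap-arounds are `(q, 0, q)` and `(0, q, 0)`
  have hcases : a + c = 2 * b ∨ (a = q ∧ c = q ∧ b = 0) ∨ (a = 0 ∧ c = 0 ∧ b = q) := by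
    obtain ⟨k, hk⟩ := hdvd
    rcases (show q = 0 ∨ 0 < q by omega) with hq | hq
    · omega
    have hk₁ : -1 ≤ k := by nlinarith
    have hk₂ : k ≤ 1 := by nlinarith
    interval_cases k <;> omega
  unfold arch
  rcases hcases with hmid | ⟨rfl, rfl, rfl⟩ | ⟨rfl, rfl, rfl⟩
  · have hdefect : 2 * (2 * (b * (q - b)) - (a * (q - a) + c * (q - c))) = (a - c) ^ 2 := by
      linear_combination (a + c + 2 * b - 2 * q) * hmid
    refine ⟨by nlinarith [sq_nonneg (a - c)], fun h => ?_⟩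
    have : (a - c) ^ 2 = 0 := by linarith
    linarith [pow_eq_zero_iff (n := 2) two_ne_zero |>.1 this]
  · simp
  · simp

theorem arch_add_arch_le_of_add_eq_add {q : ℕ} {a b c : Fin (q + 1)}
    (h : ((a : ℕ) : ZMod (2 * q)) + (c : ℕ) = (b : ℕ) + (b : ℕ)) :
    arch q a + arch q c ≤ 2 * arch q b ∧ (arch q a + arch q c = 2 * arch q b → a = c) := by
  have hdvd : ((2 * q : ℕ) : ℤ) ∣ a + c - 2 * b := by
    rw [← ZMod.intCast_eq_intCast_iff_dvd_sub]
    push_cast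
    rw [h]; ring
  have hmem : ∀ x : Fin (q + 1), ((x : ℕ) : ℤ) ∈ Set.Icc 0 (q : ℤ) := fun x =>
    ⟨by positivity, by exact_mod_cast Nat.lt_succ_iff.1 x.isLt⟩
  obtain ⟨hle, heq⟩ := arch_add_arch_le (hmem a) (hmem b) (hmem c) (by exact_mod_cast hdvd)
  exact ⟨hle, fun he => Fin.ext (by exact_mod_cast heq he)⟩

def archLevelSet (q n : ℕ) (t : ℤ) : Finset (Fin n → ZMod (2 * q)) :=
  image (fun y i => ((y i : ℕ) : ZMod (2 * q))) {y : Fin n → Fin (q + 1) | ∑ i, arch q (y i) = t}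

theorem progFree_archLevelSet (q n : ℕ) (t : ℤ) : ProgFree (2 * q) 3 (archLevelSet q n t) := by
  refine progFree_three_of_add_eq_add ?_
  simp only [archLevelSet, mem_image, mem_filter, mem_univ, true_and]
  rintro _ ⟨y₀, hy₀, rfl⟩ _ ⟨y₁, hy₁, rfl⟩ _ ⟨y₂, hy₂, rfl⟩ heq
  have hcoord i := arch_add_arch_le_of_add_eq_add (congrFun heq i)
  have hsum : ∑ i, (arch q (y₀ i) + arch q (y₂ i) - 2 * arch q (y₁ i)) = 0 := by
    rw [sum_sub_distrib, sum_add_distrib, ← mul_sum, hy₀, hy₁, hy₂]; ring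
  rw [sum_eq_zero_iff_of_nonpos fun i _ => sub_nonpos.2 (hcoord i).1] at hsum
  have : y₀ = y₂ := funext fun i => (hcoord i).2 (by linarith [hsum i (mem_univ i)])
  rw [this]

theorem archLevelSet_card (q n : ℕ) (hq : 1 ≤ q) (t : ℤ) :
    #(archLevelSet q n t) = #{y : Fin n → Fin (q + 1) | ∑ i, arch q (y i) = t} := by
  refine card_image_of_injective _ fun y z hyz => funext fun i => Fin.ext ?_
  have hval := congrArg ZMod.val (congrFun hyz i)
  have hlt : ∀ x : Fin (q + 1), (x : ℕ) < 2 * q := fun x => by omega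
  rwa [ZMod.val_cast_of_lt (hlt _), ZMod.val_cast_of_lt (hlt _)] at hval

section AntiConcentration

variable {β : Type*} [Fintype β]

theorem Fin.sum_univ_fun_succ {M : Type*} [AddCommMonoid M] {n : ℕ} (f : (Fin (n + 1) → β) → M) :
    ∑ x, f x = ∑ a, ∑ y : Fin n → β, f (Fin.cons a y) := by
  rw [← (Fin.consEquiv fun _ => β).sum_comp, Fintype.sum_prod_type]
  rfl

theorem sum_sum_comp_eq_zero (h : β → ℤ) (hh : ∑ b, h b = 0) (n : ℕ) :
    ∑ x : Fin n → β, ∑ i, h (x i) = 0 := by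
  rw [Finset.sum_comm]
  refine Finset.sum_eq_zero fun i _ => ?_
  simpa [hh] using Fintype.sum_piFinset_apply h (univ : Finset β) i

theorem card_mul_sum_sq_sum_comp (h : β → ℤ) (hh : ∑ b, h b = 0) (n : ℕ) :
    Fintype.card β * ∑ x : Fin n → β, (∑ i, h (x i)) ^ 2
      = n * Fintype.card β ^ n * ∑ b, h b ^ 2 := by
  induction n with
  | zero => simp
  | succ n ih =>
    have hcons : ∀ a (y : Fin n → β), (∑ i, h ((Fin.cons a y : Fin (n + 1) → β) i)) ^ 2
        = h a ^ 2 + 2 * h a * ∑ i, h (y i) + (∑ i, h (y i)) ^ 2 := by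
      intro a y
      rw [Fin.sum_univ_succ]
      simp only [Fin.cons_zero, Fin.cons_succ]
      ring
    simp only [Fin.sum_univ_fun_succ, hcons, Finset.sum_add_distrib, ← Finset.mul_sum,
      sum_sum_comp_eq_zero h hh, ← Finset.sum_mul, Finset.sum_const, Finset.card_univ,
      nsmul_eq_mul, Fintype.card_fun, Fintype.card_fin, mul_add, ih]
    push_cast
    ring

theorem exists_card_fiber_ge_of_sum_sq_le {α : Type*} [Fintype α] (F : α → ℤ) (R : ℕ)
    (hF : 2 * ∑ x, F x ^ 2 ≤ (R + 1) ^ 2 * Fintype.card α) :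
    ∃ t, (Fintype.card α : ℝ) ≤ 2 * (2 * R + 1) * #{x | F x = t} := by
  have hbad : (R + 1) ^ 2 * #{x | ¬ |F x| ≤ R} ≤ ∑ x, F x ^ 2 := by
    calc ((R + 1) ^ 2 * #{x | ¬ |F x| ≤ R} : ℤ) = ∑ x with ¬ |F x| ≤ R, ((R : ℤ) + 1) ^ 2 := by
          simp [mul_comm]
      _ ≤ ∑ x with ¬ |F x| ≤ R, F x ^ 2 := by
          refine sum_le_sum fun x hx => ?_
          rw [mem_filter, not_le] at hx
          nlinarith [sq_abs (F x), abs_nonneg (F x)]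
      _ ≤ ∑ x, F x ^ 2 := sum_le_sum_of_subset_of_nonneg (subset_univ _) fun _ _ _ => sq_nonneg _
  have hgood : Fintype.card α ≤ 2 * #{x | |F x| ≤ R} := by
    have hsplit := card_filter_add_card_filter_not (s := univ) (fun x => |F x| ≤ R)
    have : ((R + 1) ^ 2 : ℤ) * (2 * #{x | ¬ |F x| ≤ R}) ≤ (R + 1) ^ 2 * Fintype.card α := by
      linarith
    have : 2 * #{x | ¬ |F x| ≤ R} ≤ Fintype.card α := by
      exact_mod_cast le_of_mul_le_mul_left this (by positivity)
    rw [card_univ] at hsplit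
    omega
  have hmaps : ∀ x ∈ ({x | |F x| ≤ R} : Finset α), F x ∈ Icc (-(R : ℤ)) R := fun x hx => by
    rw [mem_Icc, ← abs_le]; exact (mem_filter.1 hx).2
  have hIcc : #(Icc (-(R : ℤ)) R) = 2 * R + 1 := by simp; omega
  obtain ⟨t, -, ht⟩ := exists_le_card_fiber_of_nsmul_le_card_of_maps_to hmaps
    (nonempty_Icc.2 (by omega)) (b := (#{x | |F x| ≤ R} : ℝ) / (2 * R + 1)) (by
      rw [hIcc, nsmul_eq_mul, Nat.cast_add_one, Nat.cast_mul, Nat.cast_two,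
        mul_div_cancel₀ _ (by positivity)])
  refine ⟨t, ?_⟩
  rw [div_le_iff₀ (by positivity)] at ht
  have hsub : #{x ∈ ({x | |F x| ≤ R} : Finset α) | F x = t} ≤ #{x | F x = t} :=
    card_le_card (filter_subset_filter _ (filter_subset _ _))
  calc (Fintype.card α : ℝ) ≤ 2 * #{x | |F x| ≤ R} := by exact_mod_cast hgood
    _ ≤ 2 * (#{x ∈ ({x | |F x| ≤ R} : Finset α) | F x = t} * (2 * R + 1)) := by gcongr
    _ ≤ 2 * (#{x | F x = t} * (2 * R + 1)) := by gcongr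
    _ = 2 * (2 * R + 1) * #{x | F x = t} := by ring

theorem exists_card_level_set_ge_of_sum_eq_zero [Nonempty β] (h : β → ℤ) (hh : ∑ b, h b = 0)
    (n : ℕ) : ∃ s, (Fintype.card β : ℝ) ^ n ≤
      2 * (2 * √(2 * n * ∑ b, (h b : ℝ) ^ 2) + 1) * #{x : Fin n → β | ∑ i, h (x i) = s} := by
  set b := Fintype.card β
  have hb : (1 : ℤ) ≤ b := by exact_mod_cast Fintype.card_pos
  set K := ∑ c, (h c).natAbs ^ 2
  have hK : (K : ℤ) = ∑ c, h c ^ 2 := by simp [K]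
  set R := Nat.sqrt (2 * n * K)
  have hR : 2 * (n : ℤ) * K < (R + 1) ^ 2 := by exact_mod_cast Nat.lt_succ_sqrt' (2 * n * K)
  obtain ⟨s, hs⟩ := exists_card_fiber_ge_of_sum_sq_le (fun x : Fin n → β => ∑ i, h (x i)) R (by
    have hvar := card_mul_sum_sq_sum_comp h hh n
    have hpow : (0 : ℤ) ≤ b ^ n := by positivity
    rw [Fintype.card_fun, Fintype.card_fin]
    refine le_of_mul_le_mul_left (a := (b : ℤ)) ?_ (by omega)
    rw [mul_left_comm, hvar, ← hK]
    push_cast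
    nlinarith [mul_le_mul_of_nonneg_right hR.le hpow,
      mul_le_mul_of_nonneg_right hb (mul_nonneg (sq_nonneg ((R : ℤ) + 1)) hpow)])
  refine ⟨s, ?_⟩
  rw [Fintype.card_fun, Fintype.card_fin, Nat.cast_pow] at hs
  have hKℝ : ∑ c, (h c : ℝ) ^ 2 = K := by exact_mod_cast hK.symm
  have hRK : (R : ℝ) ≤ √(2 * n * K) := Real.nat_sqrt_le_real_sqrt.trans_eq (by push_cast; rfl)
  rw [hKℝ]
  exact hs.trans (by gcongr)

theorem exists_forall_exists_card_level_set_ge [Nonempty β] (f : β → ℤ) :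
    ∃ C > 0, ∀ n : ℕ, 1 ≤ n → ∃ t,
      C / √n * Fintype.card β ^ n ≤ #{x : Fin n → β | ∑ i, f (x i) = t} := by
  set b := Fintype.card β
  have hb : 0 < b := Fintype.card_pos
  -- the level sets of `∑ i, h (x i)` for the centred `h` are level sets of `∑ i, f (x i)`
  set h : β → ℤ := fun c => b * f c - ∑ c, f c
  have hh : ∑ c, h c = 0 := by simp [h, Finset.sum_sub_distrib, Finset.mul_sum, b]
  have hsum (n : ℕ) (x : Fin n → β) : ∑ i, h (x i) = b * ∑ i, f (x i) - n * ∑ c, f c := by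
    simp [h, Finset.sum_sub_distrib, Finset.mul_sum]
  set K := ∑ c, (h c : ℝ) ^ 2
  set c := 2 * (2 * √(2 * K) + 1)
  have hc₀ : 0 < c := by positivity
  refine ⟨1 / c, by positivity, fun n hn => ?_⟩
  obtain ⟨s, hs⟩ := exists_card_level_set_ge_of_sum_eq_zero h hh n
  obtain ⟨x₀, hx₀⟩ : ({x : Fin n → β | ∑ i, h (x i) = s} : Finset _).Nonempty := by
    refine nonempty_iff_ne_empty.2 fun hempty => ?_
    rw [hempty, card_empty, Nat.cast_zero, mul_zero] at hs
    exact hs.not_gt (by positivity)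
  refine ⟨∑ i, f (x₀ i), ?_⟩
  have hsub : ({x : Fin n → β | ∑ i, h (x i) = s} : Finset _) ⊆
      ({x : Fin n → β | ∑ i, f (x i) = ∑ i, f (x₀ i)} : Finset _) := by
    intro x hx
    simp only [mem_filter, mem_univ, true_and] at hx hx₀ ⊢
    have : (b : ℤ) * ∑ i, f (x i) = b * ∑ i, f (x₀ i) := by linarith [hsum n x, hsum n x₀]
    exact mul_left_cancel₀ (by exact_mod_cast hb.ne') this
  have hsub' : (#({x : Fin n → β | ∑ i, h (x i) = s} : Finset _) : ℝ) ≤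
      #({x : Fin n → β | ∑ i, f (x i) = ∑ i, f (x₀ i)} : Finset _) := by
    exact_mod_cast card_le_card hsub
  have hn' : (1 : ℝ) ≤ √n := by simpa using Real.sqrt_le_sqrt (by exact_mod_cast hn : (1 : ℝ) ≤ n)
  have hc : 2 * (2 * √(2 * n * K) + 1) ≤ c * √n := by
    rw [mul_right_comm, Real.sqrt_mul (by positivity) n]
    nlinarith [Real.sqrt_nonneg (2 * K)]
  calc 1 / c / √n * b ^ n
      ≤ 1 / c / √n * (c * √n * #({x : Fin n → β | ∑ i, h (x i) = s} : Finset _)) := by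
        gcongr
        exact hs.trans (by gcongr)
    _ = #({x : Fin n → β | ∑ i, h (x i) = s} : Finset _) := by field_simp
    _ ≤ _ := hsub'

end AntiConcentration

theorem stmt9 (m : ℕ) (hm : 4 ≤ m) (heven : Even m) :
    ∃ C : ℝ, 0 < C ∧ ∀ n : ℕ, 1 ≤ n →
      C / Real.sqrt n * (((m : ℝ) + 2) / 2) ^ n ≤ (rAP 3 m n : ℝ) := by
  obtain ⟨q, rfl⟩ := heven.two_dvd
  have hq : 1 ≤ q := by omega
  have : NeZero (2 * q) := ⟨by omega⟩
  obtain ⟨C, hC, hlevel⟩ :=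
    exists_forall_exists_card_level_set_ge fun a : Fin (q + 1) => arch q (a : ℕ)
  refine ⟨C, hC, fun n hn => ?_⟩
  obtain ⟨t, ht⟩ := hlevel n hn
  calc C / √n * ((((2 * q : ℕ) : ℝ) + 2) / 2) ^ n
      = C / √n * Fintype.card (Fin (q + 1)) ^ n := by rw [Fintype.card_fin]; push_cast; ring
    _ ≤ #(archLevelSet q n t) := by rwa [archLevelSet_card q n hq]
    _ ≤ rAP 3 (2 * q) n := by exact_mod_cast card_le_rAP (progFree_archLevelSet q n t)
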